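/- Let Ω ⊆ ℝⁿ be open, O ⋐ Ω, u ∈ C¹(Ω, ℝᴺ), H ∈ C²(Ω × ℝᴺ × ℝ^{N×n}, ℝ) with H(x,·,·) jointly convex on ℝᴺ × ℝ^{N×n} for each x, and A : ℝⁿ → ℝᴺ affine. Fix a point x ∈ O̅ with H(x, u(x), Du(x)) = max_{y∈O̅} H(y, u(y), Du(y)), and suppose ⟨H_P(x,u(x),Du(x)), DA⟩ + ⟨H_η(x,u(x),Du(x)), A(x)⟩ ≥ 0. Then E_∞(u, O) ≤ E_∞(u + A, O), where E_∞(v, O) := max_{y∈O̅} H(y, v(y), Dv(y)). -/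

import Mathlib

/-!
Evaluate at the maximiser `x`. Convexity of `H(x,·,·)` puts its graph above the tangent plane at
`(u(x), Du(x))`, so in the direction `(A(x), DA)` of nonnegative first variation
`E_∞(u, O) = H(x, u(x), Du(x)) ≤ H(x, u(x) + A(x), Du(x) + DA)`, and the right-hand side is one of
the values whose supremum is `E_∞(u + A, O)`, a supremum that is finite because `O̅` is compact and
the integrand of `u + A` is continuous.
-/

open scoped RealInnerProductSpace

noncomputable section

/-- The gradient matrix `Dv(x) ∈ ℝ^{N×n}` of a map `v : ℝⁿ → ℝᴺ`. -/
def gradMatrix {n N : ℕ} (v : EuclideanSpace ℝ (Fin n) → EuclideanSpace ℝ (Fin N))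
    (x : EuclideanSpace ℝ (Fin n)) : EuclideanSpace ℝ (Fin N × Fin n) :=
  (WithLp.equiv 2 _).symm fun p => fderiv ℝ v x (EuclideanSpace.single p.2 1) p.1

/-- The supremal functional `E_∞(v, O) = sup_{x ∈ O̅} H(x, v(x), Dv(x))`. -/
def Einf {n N : ℕ}
    (H : EuclideanSpace ℝ (Fin n) × EuclideanSpace ℝ (Fin N) ×
      EuclideanSpace ℝ (Fin N × Fin n) → ℝ)
    (v : EuclideanSpace ℝ (Fin n) → EuclideanSpace ℝ (Fin N))
    (O : Set (EuclideanSpace ℝ (Fin n))) : ℝ :=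
  sSup ((fun z => H (z, v z, gradMatrix v z)) '' closure O)

open Set

theorem ConvexOn.add_fderiv_le {E : Type*} [NormedAddCommGroup E] [NormedSpace ℝ E]
    {s : Set E} {f : E → ℝ} (hf : ConvexOn ℝ s f) {p v : E} (hp : p ∈ s) (hpv : p + v ∈ s)
    (hd : DifferentiableAt ℝ f p) : f p + fderiv ℝ f p v ≤ f (p + v) := by
  set g : ℝ → ℝ := f ∘ AffineMap.lineMap p (p + v)
  have hg : ConvexOn ℝ (AffineMap.lineMap p (p + v) ⁻¹' s) g := hf.comp_affineMap _
  have hline : ∀ t : ℝ, AffineMap.lineMap p (p + v) t = p + t • v := fun t => by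
    rw [AffineMap.lineMap_apply, vsub_eq_sub, add_sub_cancel_left, vadd_eq_add, add_comm]
  have hderiv : HasDerivAt g (fderiv ℝ f p v) 0 := by
    have hcurve : HasDerivAt (fun t : ℝ => p + t • v) v 0 :=
      ((hasDerivAt_id (0 : ℝ)).smul_const v).const_add p |>.congr_deriv (one_smul ℝ v)
    have hf0 : HasFDerivAt f (fderiv ℝ f p) (p + (0 : ℝ) • v) := by
      rw [zero_smul, add_zero]; exact hd.hasFDerivAt
    simpa only [g, Function.comp_def, hline] using hf0.comp_hasDerivAt 0 hcurve
  have hslope := hg.le_slope_of_hasDerivAt (x := 0) (y := 1) (by simpa [hline] using hp)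
    (by simpa [hline] using hpv) zero_lt_one hderiv
  have hg0 : g 0 = f p := by simp [g, hline]
  have hg1 : g 1 = f (p + v) := by simp [g, hline]
  rw [slope_def_field, hg0, hg1, sub_zero, div_one] at hslope
  linarith

theorem fderiv_apply_eq_inner_gradient_add_inner_gradient {E F : Type*}
    [NormedAddCommGroup E] [InnerProductSpace ℝ E] [CompleteSpace E]
    [NormedAddCommGroup F] [InnerProductSpace ℝ F] [CompleteSpace F]
    {f : E × F → ℝ} {p : E × F} (hf : DifferentiableAt ℝ f p) (a : E) (b : F) :
    fderiv ℝ f p (a, b) =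
      ⟪gradient (fun e => f (e, p.2)) p.1, a⟫ + ⟪gradient (fun y => f (p.1, y)) p.2, b⟫ := by
  have hleft : fderiv ℝ (fun e => f (e, p.2)) p.1 = (fderiv ℝ f p).comp (.inl ℝ E F) :=
    (hf.hasFDerivAt.comp p.1 (hasFDerivAt_prodMk_left p.1 p.2)).fderiv
  have hright : fderiv ℝ (fun y => f (p.1, y)) p.2 = (fderiv ℝ f p).comp (.inr ℝ E F) :=
    (hf.hasFDerivAt.comp p.2 (hasFDerivAt_prodMk_right p.1 p.2)).fderiv
  rw [gradient, gradient, InnerProductSpace.toDual_symm_apply,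
    InnerProductSpace.toDual_symm_apply, hleft, hright]
  simp only [ContinuousLinearMap.comp_apply, ContinuousLinearMap.inl_apply,
    ContinuousLinearMap.inr_apply, ← map_add, Prod.mk_add_mk, add_zero, zero_add]

section gradMatrix

variable {n N : ℕ}

theorem gradMatrix_add {u A : EuclideanSpace ℝ (Fin n) → EuclideanSpace ℝ (Fin N)}
    {x : EuclideanSpace ℝ (Fin n)} (hu : DifferentiableAt ℝ u x) (hA : DifferentiableAt ℝ A x) :
    gradMatrix (fun z => u z + A z) x = gradMatrix u x + gradMatrix A x := by
  unfold gradMatrix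
  rw [fderiv_fun_add hu hA]
  rfl

theorem continuousOn_gradMatrix {v : EuclideanSpace ℝ (Fin n) → EuclideanSpace ℝ (Fin N)}
    {Ω : Set (EuclideanSpace ℝ (Fin n))} (hΩ : IsOpen Ω) (hv : ContDiffOn ℝ 1 v Ω) :
    ContinuousOn (gradMatrix v) Ω := by
  have hDv : ContinuousOn (fderiv ℝ v) Ω := hv.continuousOn_fderiv_of_isOpen hΩ le_rfl
  refine (PiLp.continuous_toLp 2 _).comp_continuousOn (continuousOn_pi.mpr fun q => ?_)
  exact ((EuclideanSpace.proj q.1).continuous.comp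
    (ContinuousLinearMap.apply ℝ _ (EuclideanSpace.single q.2 (1 : ℝ))).continuous).comp_continuousOn
      hDv

theorem le_Einf {H : EuclideanSpace ℝ (Fin n) × EuclideanSpace ℝ (Fin N) ×
      EuclideanSpace ℝ (Fin N × Fin n) → ℝ}
    {v : EuclideanSpace ℝ (Fin n) → EuclideanSpace ℝ (Fin N)} {Ω O : Set (EuclideanSpace ℝ (Fin n))}
    (hΩ : IsOpen Ω) (hOc : IsCompact (closure O)) (hOΩ : closure O ⊆ Ω)
    (hH : ContinuousOn H (Ω ×ˢ univ)) (hv : ContDiffOn ℝ 1 v Ω)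
    {x : EuclideanSpace ℝ (Fin n)} (hx : x ∈ closure O) :
    H (x, v x, gradMatrix v x) ≤ Einf H v O := by
  have hcont : ContinuousOn (fun z => H (z, v z, gradMatrix v z)) (closure O) :=
    hH.comp ((continuousOn_id.prodMk (hv.continuousOn.prodMk
      (continuousOn_gradMatrix hΩ hv))).mono hOΩ) fun z hz => ⟨hOΩ hz, mem_univ _⟩
  exact le_csSup (hOc.image_of_continuousOn hcont).bddAbove ⟨x, hx, rfl⟩

end gradMatrix

/-- If `H(x,·,·)` is jointly convex, `x ∈ O̅` is a maximiser of
`y ↦ H(y,u(y),Du(y))` over `O̅`, and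
`⟨H_P(x,u(x),Du(x)), DA⟩ + ⟨H_η(x,u(x),Du(x)), A(x)⟩ ≥ 0`, then
`E_∞(u, O) ≤ E_∞(u + A, O)`. -/
theorem energy_minimality_of_first_variation_nonneg {n N : ℕ}
    (Ω O : Set (EuclideanSpace ℝ (Fin n))) (hΩ : IsOpen Ω)
    (hOc : IsCompact (closure O)) (hOΩ : closure O ⊆ Ω)
    (u : EuclideanSpace ℝ (Fin n) → EuclideanSpace ℝ (Fin N))
    (hu : ContDiffOn ℝ 1 u Ω)
    (H : EuclideanSpace ℝ (Fin n) × EuclideanSpace ℝ (Fin N) ×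
      EuclideanSpace ℝ (Fin N × Fin n) → ℝ)
    (hH : ContDiffOn ℝ 2 H (Ω ×ˢ (Set.univ : Set (EuclideanSpace ℝ (Fin N) ×
      EuclideanSpace ℝ (Fin N × Fin n)))))
    (hconv : ∀ z : EuclideanSpace ℝ (Fin n),
      ConvexOn ℝ Set.univ (fun p : EuclideanSpace ℝ (Fin N) ×
        EuclideanSpace ℝ (Fin N × Fin n) => H (z, p.1, p.2)))
    (A : EuclideanSpace ℝ (Fin n) → EuclideanSpace ℝ (Fin N))
    (LA : EuclideanSpace ℝ (Fin n) →ₗ[ℝ] EuclideanSpace ℝ (Fin N))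
    (bA : EuclideanSpace ℝ (Fin N)) (hA : ∀ z, A z = LA z + bA)
    (x : EuclideanSpace ℝ (Fin n)) (hx : x ∈ closure O)
    (hxmax : H (x, u x, gradMatrix u x) = Einf H u O)
    (hineq : 0 ≤ ⟪gradient (fun Q => H (x, u x, Q)) (gradMatrix u x), gradMatrix A x⟫
        + ⟪gradient (fun η => H (x, η, gradMatrix u x)) (u x), A x⟫) :
    Einf H u O ≤ Einf H (fun z => u z + A z) O := by
  have hAsmooth : ContDiff ℝ 1 A := by
    rw [funext hA]; exact LA.toContinuousLinearMap.contDiff.add contDiff_const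
  have hHx : DifferentiableAt ℝ (fun p => H (x, p.1, p.2)) (u x, gradMatrix u x) :=
    ((hH.contDiffAt ((hΩ.prod isOpen_univ).mem_nhds ⟨hOΩ hx, mem_univ _⟩)).differentiableAt
      two_ne_zero).comp _ (differentiableAt_const x |>.prodMk differentiableAt_id)
  have hvariation :
      0 ≤ fderiv ℝ (fun p => H (x, p.1, p.2)) (u x, gradMatrix u x) (A x, gradMatrix A x) := by
    rw [fderiv_apply_eq_inner_gradient_add_inner_gradient hHx]
    linarith
  have htangent := (hconv x).add_fderiv_le (mem_univ _) (mem_univ (_ + (A x, gradMatrix A x))) hHx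
  have hgrad : gradMatrix (fun z => u z + A z) x = gradMatrix u x + gradMatrix A x :=
    gradMatrix_add ((hu.contDiffAt (hΩ.mem_nhds (hOΩ hx))).differentiableAt one_ne_zero)
      (hAsmooth.differentiable one_ne_zero x)
  calc Einf H u O = H (x, u x, gradMatrix u x) := hxmax.symm
    _ ≤ H (x, u x + A x, gradMatrix u x + gradMatrix A x) :=
      (le_add_of_nonneg_right hvariation).trans htangent
    _ = H (x, u x + A x, gradMatrix (fun z => u z + A z) x) := by rw [hgrad]
    _ ≤ Einf H (fun z => u z + A z) O :=
      le_Einf hΩ hOc hOΩ hH.continuousOn (hu.add hAsmooth.contDiffOn) hx
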